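/- Let F be the free Lie ring over ℤ on a set X, let R be a Lie ideal of F, and let 𝔯 be the two-sided ideal of U(F) generated by ι(R). If f ∈ F satisfies ι(f) ∈ ϖ(F)^n + 𝔯 for some n ≥ 1, then there exists f' ∈ F with ι(f') ∈ ϖ(F)^n + ϖ(F)·𝔯 and f' − f ∈ R. -/

import Mathlib

open UniversalEnvelopingAlgebra LieModule

attribute [local instance 100] LieRing.ofAssociativeRing

/-- The two-sided ideal (as a ℤ-submodule) of a ring `U` generated by a set `s`. -/
def twoSidedSpan (U : Type*) [Ring U] (s : Set U) : Submodule ℤ U :=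
  ⊤ * Submodule.span ℤ s * ⊤

/-- The augmentation ideal `ϖ(L)` of the universal enveloping algebra of a Lie ring `L`,
i.e. the two-sided ideal of `𝒰(L)` generated by the image of the canonical map `ι : L → 𝒰(L)`. -/
noncomputable def aug (L : Type*) [LieRing L] [LieAlgebra ℤ L] :
    Submodule ℤ (UniversalEnvelopingAlgebra ℤ L) :=
  twoSidedSpan _ (Set.range (ι ℤ : L →ₗ⁅ℤ⁆ UniversalEnvelopingAlgebra ℤ L))

/-! Because `R` is a Lie ideal, `ι r * ι y = ι y * ι r + ι ⁅r, y⁆` lets right multiplication by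
the generators `ι y` pass through `ι(R)`, so `𝔯 = U·ι(R)`. Since `U = ℤ·1 + ϖ`, this gives
`𝔯 = ι(R) + ϖ·𝔯` (note `ι(R)` is already an additive subgroup). Hence the `𝔯`-component of `ι f`
is some `ι r` modulo `ϖ·𝔯`, and `f' = f - r` works. -/

theorem Submodule.top_mul_top (K A : Type*) [CommSemiring K] [Semiring A] [Algebra K A] :
    (⊤ : Submodule K A) * ⊤ = ⊤ :=
  le_antisymm le_top (by simpa using mul_le_mul_right (le_top : (1 : Submodule K A) ≤ ⊤) ⊤)

section TwoSidedSpan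

variable {A : Type*} [Ring A] {s : Set A}

theorem span_le_twoSidedSpan : Submodule.span ℤ s ≤ twoSidedSpan A s := by
  have h1 : (1 : Submodule ℤ A) ≤ ⊤ := le_top
  simpa [twoSidedSpan] using mul_le_mul' (mul_le_mul' h1 le_rfl) h1

theorem twoSidedSpan_mul_top : twoSidedSpan A s * ⊤ = twoSidedSpan A s := by
  rw [twoSidedSpan, mul_assoc, Submodule.top_mul_top]

theorem top_le_one_sup_twoSidedSpan (hs : Subring.closure s = ⊤) :
    ⊤ ≤ 1 ⊔ twoSidedSpan A s := by
  set I := twoSidedSpan A s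
  have hII : I * I ≤ I := (mul_le_mul_right le_top I).trans twoSidedSpan_mul_top.le
  have hmul : (1 ⊔ I) * (1 ⊔ I) ≤ 1 ⊔ I := by
    simp only [Submodule.mul_sup, Submodule.sup_mul, one_mul, mul_one]
    exact sup_le le_rfl (sup_le le_sup_right (hII.trans le_sup_right))
  let B : Subalgebra ℤ A := (1 ⊔ I).toSubalgebra (Submodule.one_le.mp le_sup_left)
    fun x y hx hy => hmul (Submodule.mul_mem_mul hx hy)
  have hB : Subring.closure s ≤ B.toSubring := Subring.closure_le.2 fun x hx =>
    Submodule.mem_sup_right (span_le_twoSidedSpan (Submodule.subset_span hx))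
  intro x _
  exact hB (hs ▸ Subring.mem_top x)

theorem top_mul_le_sup_twoSidedSpan_mul (hs : Subring.closure s = ⊤) (N : Submodule ℤ A) :
    ⊤ * N ≤ N ⊔ twoSidedSpan A s * N :=
  calc ⊤ * N ≤ (1 ⊔ twoSidedSpan A s) * N := mul_le_mul_left (top_le_one_sup_twoSidedSpan hs) N
    _ = N ⊔ twoSidedSpan A s * N := by rw [Submodule.sup_mul, one_mul]

theorem mul_top_le_of_forall_mul_mem (hs : Subring.closure s = ⊤) {P : Submodule ℤ A}
    (hP : ∀ m ∈ P, ∀ x ∈ s, m * x ∈ P) : P * ⊤ ≤ P := by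
  refine Submodule.mul_le.2 fun m hm u hu => ?_
  clear hu
  have hu : u ∈ Subring.closure s := hs ▸ Subring.mem_top u
  induction hu using Subring.closure_induction generalizing m with
  | mem x hx => exact hP m hm x hx
  | zero => rw [mul_zero]; exact P.zero_mem
  | one => simpa using hm
  | add x y _ _ hx hy => rw [mul_add]; exact add_mem (hx m hm) (hy m hm)
  | neg x _ hx => rw [mul_neg]; exact neg_mem (hx m hm)
  | mul x y _ _ hx hy => rw [← mul_assoc]; exact hy _ (hx m hm)

end TwoSidedSpan

namespace UniversalEnvelopingAlgebra

theorem adjoin_range_ι (K L : Type*) [CommRing K] [LieRing L] [LieAlgebra K L] :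
    Algebra.adjoin K (Set.range (ι K : L → UniversalEnvelopingAlgebra K L)) = ⊤ := by
  have hι : Set.range (ι K : L → UniversalEnvelopingAlgebra K L) =
      mkAlgHom K L '' Set.range (TensorAlgebra.ι K) := by
    rw [← Set.range_comp]; rfl
  rw [hι, Algebra.adjoin_image, TensorAlgebra.adjoin_range_ι, Algebra.map_top,
    AlgHom.range_eq_top]
  exact RingCon.mkₐ_surjective _

variable {L : Type*} [LieRing L] [LieAlgebra ℤ L]

theorem closure_range_ι :
    Subring.closure (Set.range (ι ℤ : L → UniversalEnvelopingAlgebra ℤ L)) = ⊤ := by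
  have h := adjoin_range_ι ℤ L
  rw [← Algebra.toSubring_eq_top, Algebra.adjoin_eq_ring_closure] at h
  refine eq_top_iff.2 (h ▸ Subring.closure_le.2 (Set.union_subset ?_ Subring.subset_closure))
  rintro _ ⟨z, rfl⟩
  rw [eq_intCast]
  exact intCast_mem _ z

end UniversalEnvelopingAlgebra

section LieIdeal

variable {L : Type*} [LieRing L] [LieAlgebra ℤ L] (R : LieIdeal ℤ L)

local notation "ιR" => Submodule.span ℤ ((ι ℤ : L → UniversalEnvelopingAlgebra ℤ L) '' R)

local notation "𝔯" => twoSidedSpan _ ((ι ℤ : L → UniversalEnvelopingAlgebra ℤ L) '' R)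

theorem exists_ι_eq_of_mem_span_image {t : UniversalEnvelopingAlgebra ℤ L}
    (ht : t ∈ ιR) : ∃ r ∈ R, ι ℤ r = t := by
  rw [← Submodule.mem_toAddSubgroup, Submodule.span_int_eq_addSubgroupClosure] at ht
  induction ht using AddSubgroup.closure_induction with
  | mem x hx => exact hx
  | zero => exact ⟨0, zero_mem R, map_zero _⟩
  | add _ _ _ _ hx hy =>
    obtain ⟨r, hr, rfl⟩ := hx
    obtain ⟨r', hr', rfl⟩ := hy
    exact ⟨r + r', add_mem hr hr', map_add _ r r'⟩
  | neg _ _ hx =>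
    obtain ⟨r, hr, rfl⟩ := hx
    exact ⟨-r, neg_mem hr, map_neg _ r⟩

theorem twoSidedSpan_image_ι_le_top_mul_span : 𝔯 ≤ ⊤ * ιR := by
  refine mul_top_le_of_forall_mul_mem closure_range_ι ?_
  rintro m hm _ ⟨y, rfl⟩
  refine Submodule.mul_induction_on hm (fun c _ t ht => ?_) fun _ _ hx hy => ?_
  · obtain ⟨r, hr, rfl⟩ := exists_ι_eq_of_mem_span_image R ht
    have hcomm : ι ℤ r * ι ℤ y = ι ℤ y * ι ℤ r + ι ℤ ⁅r, y⁆ := by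
      rw [LieHom.map_lie, Ring.lie_def]; abel
    rw [mul_assoc, hcomm, mul_add, ← mul_assoc]
    exact add_mem
      (Submodule.mul_mem_mul Submodule.mem_top (Submodule.subset_span ⟨r, hr, rfl⟩))
      (Submodule.mul_mem_mul Submodule.mem_top
        (Submodule.subset_span ⟨_, lie_mem_left ℤ L R r y hr, rfl⟩))
  · rw [add_mul]; exact add_mem hx hy

theorem twoSidedSpan_image_ι_le : 𝔯 ≤ ιR ⊔ aug L * 𝔯 :=
  (twoSidedSpan_image_ι_le_top_mul_span R).trans <|
    (top_mul_le_sup_twoSidedSpan_mul closure_range_ι _).trans <|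
      sup_le_sup_left (mul_le_mul_right span_le_twoSidedSpan _) _

theorem exists_sub_ι_mem_aug_mul {b : UniversalEnvelopingAlgebra ℤ L} (hb : b ∈ 𝔯) :
    ∃ r ∈ R, b - ι ℤ r ∈ aug L * 𝔯 := by
  obtain ⟨t, ht, v, hv, rfl⟩ := Submodule.mem_sup.1 (twoSidedSpan_image_ι_le R hb)
  obtain ⟨r, hr, rfl⟩ := exists_ι_eq_of_mem_span_image R ht
  exact ⟨r, hr, by rwa [add_sub_cancel_left]⟩

end LieIdeal

theorem exists_congr_mod_R_general (X : Type*) (R : LieIdeal ℤ (FreeLieAlgebra ℤ X))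
    (n : ℕ) (f : FreeLieAlgebra ℤ X)
    (hf : ι ℤ f ∈ (aug (FreeLieAlgebra ℤ X)) ^ n
      ⊔ twoSidedSpan _ ((ι ℤ : FreeLieAlgebra ℤ X →ₗ⁅ℤ⁆ _) '' (R : Set (FreeLieAlgebra ℤ X)))) :
    ∃ f' : FreeLieAlgebra ℤ X,
      ι ℤ f' ∈ (aug (FreeLieAlgebra ℤ X)) ^ n
          ⊔ aug (FreeLieAlgebra ℤ X)
            * twoSidedSpan _
                ((ι ℤ : FreeLieAlgebra ℤ X →ₗ⁅ℤ⁆ _) '' (R : Set (FreeLieAlgebra ℤ X)))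
        ∧ f' - f ∈ R := by
  obtain ⟨a, ha, b, hb, hab⟩ := Submodule.mem_sup.1 hf
  obtain ⟨r, hr, hbr⟩ := exists_sub_ι_mem_aug_mul R hb
  refine ⟨f - r, ?_, by simpa using neg_mem hr⟩
  have hsplit : ι ℤ (f - r) = a + (b - ι ℤ r) := by
    rw [map_sub, ← hab, add_sub_assoc]
  exact hsplit ▸ Submodule.add_mem_sup ha hbr

/-- Let `F` be the free Lie ring over ℤ on a set `X`, `R` a Lie ideal of `F`, and `𝔯` the
two-sided ideal of `𝒰(F)` generated by `ι(R)`.  If `f ∈ F` satisfies `ι f ∈ ϖ(F)^n + 𝔯` for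
some `n ≥ 1`, then there exists `f' ∈ F` with `ι f' ∈ ϖ(F)^n + ϖ(F)·𝔯` and `f' - f ∈ R`. -/
theorem exists_congr_mod_R (X : Type*) (R : LieIdeal ℤ (FreeLieAlgebra ℤ X))
    (n : ℕ) (hn : 1 ≤ n) (f : FreeLieAlgebra ℤ X)
    (hf : ι ℤ f ∈ (aug (FreeLieAlgebra ℤ X)) ^ n
      ⊔ twoSidedSpan _ ((ι ℤ : FreeLieAlgebra ℤ X →ₗ⁅ℤ⁆ _) '' (R : Set (FreeLieAlgebra ℤ X)))) :
    ∃ f' : FreeLieAlgebra ℤ X,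
      ι ℤ f' ∈ (aug (FreeLieAlgebra ℤ X)) ^ n
          ⊔ aug (FreeLieAlgebra ℤ X)
            * twoSidedSpan _
                ((ι ℤ : FreeLieAlgebra ℤ X →ₗ⁅ℤ⁆ _) '' (R : Set (FreeLieAlgebra ℤ X)))
        ∧ f' - f ∈ R :=
  exists_congr_mod_R_general X R n f hf
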